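/- For m ∈ (0,1) and k = -1, i.e., β(m) = -1/2 - (i/(2π)) ln((1-m)/m), the functions g_m(E) = (4π² m(1-m))^{-1/2} E^{β(m)} satisfy the orthonormality relation ∫_0^∞ conj(g_{m'}(E)) g_m(E) dE = δ(m - m') in the distributional sense: for test functions φ on (0,1), ∫_0^1∫_0^1 conj(φ(m')) φ(m) [∫_0^∞ conj(g_{m'}(E)) g_m(E) dE] dm dm' = ∫_0^1 |φ(m)|² dm. -/

import Mathlib

open MeasureTheory Complex Filter Set
open scoped Real ComplexOrder

noncomputable section

/-- The Hilbert space `L²(ℝ; ℂ)`. -/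
abbrev Hsp : Type := Lp ℂ 2 (volume : Measure ℝ)

/-- The set of boundary values on `ℝ` of Hardy-class functions analytic in the
upper half-plane (with uniformly bounded `L²` norms on horizontal lines, attaining the
given boundary value in the `L²` sense). -/
def hardySet : Set Hsp :=
  {g | ∃ F : ℂ → ℂ,
    DifferentiableOn ℂ F {z : ℂ | 0 < z.im} ∧
    (∃ C : ℝ, ∀ b : ℝ, 0 < b → (∫ a : ℝ, ‖F ((a : ℂ) + (b : ℂ) * I)‖ ^ 2) ≤ C) ∧
    Tendsto (fun b : ℝ => ∫ a : ℝ, ‖F ((a : ℂ) + (b : ℂ) * I) - g a‖ ^ 2)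
      (nhdsWithin 0 (Ioi 0)) (nhds 0)}

/-- The Hardy space `H²₊(ℝ; ℂ)` as a closed subspace of `L²(ℝ; ℂ)`. -/
def hardySubmodule : Submodule ℂ Hsp := (Submodule.span ℂ hardySet).topologicalClosure

instance : CompleteSpace hardySubmodule :=
  (Submodule.isClosed_topologicalClosure _).completeSpace_coe

/-- The orthogonal projection `P₊` of `L²(ℝ; ℂ)` onto the Hardy space `H²₊(ℝ; ℂ)`. -/
def Pplus : Hsp →L[ℂ] Hsp := hardySubmodule.subtypeL.comp (hardySubmodule.orthogonalProjectionOnto)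

/-- The set of elements of `L²(ℝ; ℂ)` supported (a.e.) on `ℝ⁺`. -/
def posSuppSet : Set Hsp := {f | ∀ᵐ x : ℝ, x ≤ 0 → f x = 0}

/-- `L²(ℝ⁺; ℂ)` as a closed subspace of `L²(ℝ; ℂ)`. -/
def posSupp : Submodule ℂ Hsp := (Submodule.span ℂ posSuppSet).topologicalClosure

instance : CompleteSpace posSupp :=
  (Submodule.isClosed_topologicalClosure _).completeSpace_coe

/-- The orthogonal projection `P_{ℝ⁺}` of `L²(ℝ; ℂ)` onto `L²(ℝ⁺; ℂ)`. -/
def PposL : Hsp →L[ℂ] Hsp := posSupp.subtypeL.comp (posSupp.orthogonalProjectionOnto)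

/-- The Lyapunov operator `M = P_{ℝ⁺} P₊ P_{ℝ⁺}` on `L²(ℝ; ℂ)`. -/
def Mop : Hsp →L[ℂ] Hsp := PposL.comp (Pplus.comp PposL)

/-- The Lyapunov operator `M = (P_{ℝ⁺} P₊ P_{ℝ⁺})|_{L²(ℝ⁺;ℂ)}` on `L²(ℝ⁺; ℂ)`. -/
def Msub : posSupp →L[ℂ] posSupp :=
  (posSupp.orthogonalProjectionOnto).comp (Pplus.comp posSupp.subtypeL)

lemma memU (t : ℝ) (ψ : Hsp) :
    MemLp (fun x : ℝ => Complex.exp (-(I * (x : ℂ) * (t : ℂ))) * ψ x) 2 volume := by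
  have hm : AEStronglyMeasurable (fun x : ℝ => Complex.exp (-(I * (x : ℂ) * (t : ℂ)))) volume := by
    apply Continuous.aestronglyMeasurable
    continuity
  refine MemLp.of_le (Lp.memLp ψ) (hm.mul (Lp.aestronglyMeasurable ψ)) ?_
  filter_upwards with x
  have : ‖Complex.exp (-(I * (x : ℂ) * (t : ℂ)))‖ = 1 := by
    rw [Complex.norm_exp]
    simp
  rw [norm_mul, this, one_mul]

/-- The unitary evolution `U(t)`: `(U(t)ψ)(E) = e^{-iEt} ψ(E)`. -/
def U (t : ℝ) (ψ : Hsp) : Hsp := (memU t ψ).toLp _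


/-- The complex exponent `β(m) = -1/2 - (i/(2π)) ln((1-m)/m)`. -/
def betaExp (m : ℝ) : ℂ := -(1/2) - (I / (2 * (π : ℂ))) * (Real.log ((1 - m) / m) : ℂ)

/-- The generalized eigenfunction `g_m(E) = (2π√(m(1-m)))⁻¹ E^{β(m)}`. -/
def gm (m : ℝ) (E : ℝ) : ℂ :=
  (1 / (2 * (π : ℂ) * (Real.sqrt (m * (1 - m)) : ℂ))) * (E : ℂ) ^ betaExp m


section Stmt11AuxSection
open scoped Topology ComplexConjugate
namespace Stmt11Aux

def FT (Φ : ℝ → ℂ) (s : ℝ) : ℂ := ∫ x : ℝ, Φ x * Complex.exp (-(I * s * x))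
def AC (Φ : ℝ → ℂ) (u : ℝ) : ℂ := ∫ x : ℝ, conj (Φ x) * Φ (x - u)

lemma norm_cexp_I_mul (s x : ℝ) : ‖Complex.exp (I * s * x)‖ = 1 := by
  rw [Complex.norm_exp]
  simp [Complex.mul_re]

lemma norm_cexp_neg_I_mul (s x : ℝ) : ‖Complex.exp (-(I * s * x))‖ = 1 := by
  rw [Complex.norm_exp]
  simp [Complex.mul_re]

lemma conj_mul_self (z : ℂ) : conj z * z = ((‖z‖^2 : ℝ) : ℂ) := by
  rw [mul_comm, Complex.mul_conj, Complex.normSq_eq_norm_sq]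

variable {Φ : ℝ → ℂ}

lemma intΦ (hc : Continuous Φ) (hs : HasCompactSupport Φ) : Integrable Φ :=
  hc.integrable_of_hasCompactSupport hs

lemma bddΦ (hc : Continuous Φ) (hs : HasCompactSupport Φ) :
    ∃ M : ℝ, 0 ≤ M ∧ ∀ x, ‖Φ x‖ ≤ M := by
  obtain ⟨x₀, hx₀⟩ := hc.norm.exists_forall_ge_of_hasCompactSupport hs.norm
  exact ⟨‖Φ x₀‖, norm_nonneg _, hx₀⟩

lemma contFT (hc : Continuous Φ) (hs : HasCompactSupport Φ) : Continuous (FT Φ) := by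
  apply continuous_of_dominated (bound := fun x => ‖Φ x‖)
  · intro s
    exact (hc.mul (Complex.continuous_exp.comp (by continuity))).aestronglyMeasurable
  · intro s
    filter_upwards with x
    rw [norm_mul, norm_cexp_neg_I_mul, mul_one]
  · exact (intΦ hc hs).norm
  · filter_upwards with x
    exact continuous_const.mul (Complex.continuous_exp.comp (by continuity))

lemma norm_FT_le (s : ℝ) : ‖FT Φ s‖ ≤ ∫ x, ‖Φ x‖ := by
  refine le_trans (norm_integral_le_integral_norm _) ?_
  refine le_of_eq (integral_congr_ae ?_)
  filter_upwards with x
  rw [norm_mul, norm_cexp_neg_I_mul, mul_one]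

lemma contAC (hc : Continuous Φ) (hs : HasCompactSupport Φ) : Continuous (AC Φ) := by
  obtain ⟨M, hM0, hM⟩ := bddΦ hc hs
  apply continuous_of_dominated (bound := fun x => ‖Φ x‖ * M)
  · intro u
    exact ((Complex.continuous_conj.comp hc).mul (hc.comp (by continuity))).aestronglyMeasurable
  · intro u
    filter_upwards with x
    rw [norm_mul, RCLike.norm_conj]
    exact mul_le_mul_of_nonneg_left (hM _) (norm_nonneg _)
  · exact (intΦ hc hs).norm.mul_const M
  · filter_upwards with x
    exact continuous_const.mul (hc.comp (by continuity))

lemma norm_AC_le (hc : Continuous Φ) (hs : HasCompactSupport Φ) {M : ℝ} (hM : ∀ x, ‖Φ x‖ ≤ M)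
    (u : ℝ) : ‖AC Φ u‖ ≤ M * ∫ x, ‖Φ x‖ := by
  refine le_trans (norm_integral_le_integral_norm _) ?_
  rw [← integral_const_mul M (fun x => ‖Φ x‖)]
  apply integral_mono_of_nonneg
    (Eventually.of_forall fun x => norm_nonneg ((conj (Φ x) * Φ (x - u) : ℂ)))
    (((intΦ hc hs).norm).const_mul M)
  filter_upwards with x
  rw [norm_mul, RCLike.norm_conj, mul_comm]
  exact mul_le_mul_of_nonneg_right (hM (x - u)) (norm_nonneg (Φ x))

lemma AC_zero : AC Φ 0 = ((∫ x, ‖Φ x‖^2 : ℝ) : ℂ) := by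
  rw [AC]
  rw [show (∫ x : ℝ, conj (Φ x) * Φ (x - 0)) = ∫ x : ℝ, ((‖Φ x‖^2 : ℝ) : ℂ) from
    integral_congr_ae (Eventually.of_forall fun x => by simp only [sub_zero, conj_mul_self])]
  exact integral_ofReal



def rho (ε u : ℝ) : ℝ := Real.sqrt (π/ε) * Real.exp (-(4*ε)⁻¹ * u^2)

lemma rho_nonneg {ε : ℝ} (u : ℝ) : 0 ≤ rho ε u := by unfold rho; positivity

lemma rho_continuous (ε : ℝ) : Continuous (rho ε) := by
  unfold rho
  exact continuous_const.mul (Real.continuous_exp.comp (by continuity))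

lemma rho_integrable {ε : ℝ} (hε : 0 < ε) : Integrable (fun u => rho ε u) :=
  (integrable_exp_neg_mul_sq (by positivity : (0:ℝ) < (4*ε)⁻¹)).const_mul _

lemma gauss_kernel {ε : ℝ} (hε : 0 < ε) (t : ℝ) :
    ∫ s : ℝ, ((Real.exp (-ε * s^2) : ℝ) : ℂ) * Complex.exp (I * t * s)
      = ((rho ε t : ℝ) : ℂ) := by
  have hb : (0:ℝ) < ((ε : ℂ)).re := by simpa using hε
  have h := fourierIntegral_gaussian (b := (ε:ℂ)) hb (t : ℂ)
  have e : (fun s : ℝ => ((Real.exp (-ε * s^2) : ℝ) : ℂ) * Complex.exp (I * t * s))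
      = fun x : ℝ => Complex.exp (I * t * x) * Complex.exp (-(ε:ℂ) * (x:ℂ)^2) := by
    funext x
    rw [mul_comm]
    congr 1
    rw [Complex.ofReal_exp]
    congr 1
    push_cast
    ring
  rw [e, h, rho, Complex.ofReal_mul]
  congr 1
  · have h1 : ((π:ℂ)/(ε:ℂ)) = (((π/ε : ℝ)) : ℂ) := by push_cast; ring
    have h2 : ((1/2 : ℂ)) = (((1/2 : ℝ) : ℂ)) := by norm_num
    rw [h1, h2, ← Complex.ofReal_cpow (by positivity) (1/2 : ℝ)]
    rw [Real.sqrt_eq_rpow]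
  · rw [Complex.ofReal_exp]
    congr 1
    push_cast
    field_simp


lemma swap_helper {f : ℝ → ℝ → ℂ}
    (hmeas : AEStronglyMeasurable (fun z : ℝ × ℝ => f z.1 z.2) (volume.prod volume))
    {g h : ℝ → ℝ} (hg : Integrable g) (hh : Integrable h)
    (hbound : ∀ x y : ℝ, ‖f x y‖ ≤ g x * h y) :
    ∫ x : ℝ, ∫ y : ℝ, f x y ∂volume ∂volume = ∫ y : ℝ, ∫ x : ℝ, f x y ∂volume ∂volume := by
  refine integral_integral_swap ?_
  refine (hg.mul_prod hh).mono' hmeas ?_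
  filter_upwards with z
  exact hbound z.1 z.2

lemma conj_FT (s : ℝ) : conj (FT Φ s) = ∫ x : ℝ, conj (Φ x) * Complex.exp (I * s * x) := by
  rw [FT, ← integral_conj]
  refine integral_congr_ae (Eventually.of_forall fun x => ?_)
  beta_reduce
  rw [map_mul, ← Complex.exp_conj]
  congr 1
  simp [Complex.conj_ofReal]

lemma key1 (hc : Continuous Φ) (hs : HasCompactSupport Φ) {ε : ℝ} (hε : 0 < ε) :
    (((∫ s : ℝ, ‖FT Φ s‖^2 * Real.exp (-ε * s^2)) : ℝ) : ℂ)
      = ∫ u : ℝ, ((rho ε u : ℝ) : ℂ) * AC Φ u := by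
  obtain ⟨M, hM0, hM⟩ := bddΦ hc hs
  set M1 : ℝ := ∫ x : ℝ, ‖Φ x‖ with hM1def
  have hM1nn : 0 ≤ M1 := integral_nonneg (fun x => norm_nonneg _)
  have hGc := contFT hc hs
  have hΦi := intΦ hc hs
  have hεexp : Integrable (fun s : ℝ => Real.exp (-ε * s^2)) := integrable_exp_neg_mul_sq hε
  calc (((∫ s : ℝ, ‖FT Φ s‖^2 * Real.exp (-ε * s^2)) : ℝ) : ℂ)
      = ∫ s : ℝ, ((Real.exp (-ε * s^2) : ℝ) : ℂ) * (conj (FT Φ s) * FT Φ s) := by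
        have hofr : (∫ s : ℝ, (((‖FT Φ s‖^2 * Real.exp (-ε * s^2)) : ℝ) : ℂ))
            = (((∫ s : ℝ, ‖FT Φ s‖^2 * Real.exp (-ε * s^2)) : ℝ) : ℂ) := integral_ofReal
        rw [← hofr]
        refine integral_congr_ae (Eventually.of_forall fun s => ?_)
        beta_reduce
        rw [conj_mul_self]
        push_cast
        ring
    _ = ∫ s : ℝ, ∫ x : ℝ, ((Real.exp (-ε * s^2) : ℝ) : ℂ)
          * (conj (Φ x) * Complex.exp (I * s * x) * FT Φ s) := by
        refine integral_congr_ae (Eventually.of_forall fun s => ?_)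
        beta_reduce
        rw [conj_FT, ← integral_mul_const, ← integral_const_mul]
    _ = ∫ x : ℝ, ∫ s : ℝ, ((Real.exp (-ε * s^2) : ℝ) : ℂ)
          * (conj (Φ x) * Complex.exp (I * s * x) * FT Φ s) := by
        refine swap_helper ?_ (hεexp.mul_const M1) hΦi.norm (fun s x => ?_)
        · refine Continuous.aestronglyMeasurable ?_
          refine Continuous.mul ?_ (Continuous.mul (Continuous.mul ?_ ?_) (hGc.comp continuous_fst))
          · exact Complex.continuous_ofReal.comp
              (by continuity : Continuous fun z : ℝ × ℝ => Real.exp (-ε * z.1 ^ 2))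
          · exact Complex.continuous_conj.comp (hc.comp continuous_snd)
          · exact Complex.continuous_exp.comp (by continuity)
        · have h1 : ‖((Real.exp (-ε * s^2) : ℝ) : ℂ)
              * (conj (Φ x) * Complex.exp (I * s * x) * FT Φ s)‖
              = Real.exp (-ε * s^2) * (‖Φ x‖ * ‖FT Φ s‖) := by
            rw [norm_mul, norm_mul, norm_mul, Complex.norm_real, RCLike.norm_conj,
              norm_cexp_I_mul, Real.norm_eq_abs, _root_.abs_of_nonneg (Real.exp_pos _).le]
            ring
          rw [h1]
          calc Real.exp (-ε * s^2) * (‖Φ x‖ * ‖FT Φ s‖)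
              ≤ Real.exp (-ε * s^2) * (‖Φ x‖ * M1) := by
                refine mul_le_mul_of_nonneg_left ?_ (Real.exp_pos _).le
                exact mul_le_mul_of_nonneg_left (norm_FT_le s) (norm_nonneg _)
            _ = Real.exp (-ε * s^2) * M1 * ‖Φ x‖ := by ring
    _ = ∫ x : ℝ, conj (Φ x) * ∫ u : ℝ, Φ (x - u) * ((rho ε u : ℝ) : ℂ) := by
        refine integral_congr_ae (Eventually.of_forall fun x => ?_)
        beta_reduce
        have step1 : ∫ s : ℝ, ((Real.exp (-ε * s^2) : ℝ) : ℂ)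
            * (conj (Φ x) * Complex.exp (I * s * x) * FT Φ s)
            = conj (Φ x) * ∫ s : ℝ, ((Real.exp (-ε * s^2) : ℝ) : ℂ)
                * Complex.exp (I * s * x) * FT Φ s := by
          rw [← integral_const_mul]
          refine integral_congr_ae (Eventually.of_forall fun s => ?_)
          beta_reduce
          ring
        rw [step1]
        congr 1
        have step2 : ∫ s : ℝ, ((Real.exp (-ε * s^2) : ℝ) : ℂ)
            * Complex.exp (I * s * x) * FT Φ s
            = ∫ s : ℝ, ∫ y : ℝ, Φ y * (((Real.exp (-ε * s^2) : ℝ) : ℂ)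
                * Complex.exp (I * ((x - y : ℝ) : ℂ) * s)) := by
          refine integral_congr_ae (Eventually.of_forall fun s => ?_)
          beta_reduce
          rw [FT, ← integral_const_mul]
          refine integral_congr_ae (Eventually.of_forall fun y => ?_)
          beta_reduce
          rw [show Complex.exp (I * ((x - y : ℝ) : ℂ) * (s : ℂ))
              = Complex.exp (I * s * x) * Complex.exp (-(I * s * y)) from by
            rw [← Complex.exp_add]; congr 1; push_cast; ring]
          ring
        rw [step2]
        have step3 : ∫ s : ℝ, ∫ y : ℝ, Φ y * (((Real.exp (-ε * s^2) : ℝ) : ℂ)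
              * Complex.exp (I * ((x - y : ℝ) : ℂ) * s))
            = ∫ y : ℝ, ∫ s : ℝ, Φ y * (((Real.exp (-ε * s^2) : ℝ) : ℂ)
              * Complex.exp (I * ((x - y : ℝ) : ℂ) * s)) := by
          refine swap_helper ?_ hεexp (hΦi.norm) (fun s y => ?_)
          · refine Continuous.aestronglyMeasurable ?_
            refine Continuous.mul (hc.comp continuous_snd) (Continuous.mul ?_ ?_)
            · exact Complex.continuous_ofReal.comp
                (by continuity : Continuous fun z : ℝ × ℝ => Real.exp (-ε * z.1 ^ 2))
            · refine Complex.continuous_exp.comp ?_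
              refine Continuous.mul (Continuous.mul continuous_const ?_) ?_
              · exact Complex.continuous_ofReal.comp (by continuity)
              · exact Complex.continuous_ofReal.comp continuous_fst
          · have h1 : ‖Φ y * (((Real.exp (-ε * s^2) : ℝ) : ℂ)
                * Complex.exp (I * ((x - y : ℝ) : ℂ) * s))‖
                = Real.exp (-ε * s^2) * ‖Φ y‖ := by
              rw [norm_mul, norm_mul, Complex.norm_real, norm_cexp_I_mul, Real.norm_eq_abs,
                _root_.abs_of_nonneg (Real.exp_pos _).le]
              ring
            rw [h1]
        rw [step3]
        have step4 : ∫ y : ℝ, ∫ s : ℝ, Φ y * (((Real.exp (-ε * s^2) : ℝ) : ℂ)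
              * Complex.exp (I * ((x - y : ℝ) : ℂ) * s))
            = ∫ y : ℝ, Φ y * ((rho ε (x - y) : ℝ) : ℂ) := by
          refine integral_congr_ae (Eventually.of_forall fun y => ?_)
          beta_reduce
          rw [integral_const_mul, gauss_kernel hε (x - y)]
        rw [step4]
        rw [← integral_sub_left_eq_self (fun u => Φ (x - u) * ((rho ε u : ℝ) : ℂ)) volume x]
        refine integral_congr_ae (Eventually.of_forall fun y => ?_)
        beta_reduce
        rw [sub_sub_cancel]
    _ = ∫ x : ℝ, ∫ u : ℝ, conj (Φ x) * (Φ (x - u) * ((rho ε u : ℝ) : ℂ)) := by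
        refine integral_congr_ae (Eventually.of_forall fun x => ?_)
        beta_reduce
        rw [integral_const_mul]
    _ = ∫ u : ℝ, ∫ x : ℝ, conj (Φ x) * (Φ (x - u) * ((rho ε u : ℝ) : ℂ)) := by
        refine swap_helper ?_ hΦi.norm ((rho_integrable hε).const_mul M) (fun x u => ?_)
        · refine Continuous.aestronglyMeasurable ?_
          refine Continuous.mul (Complex.continuous_conj.comp (hc.comp continuous_fst)) ?_
          refine Continuous.mul (hc.comp (by continuity)) ?_
          exact Complex.continuous_ofReal.comp ((rho_continuous ε).comp continuous_snd)
        · have h1 : ‖conj (Φ x) * (Φ (x - u) * ((rho ε u : ℝ) : ℂ))‖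
              = ‖Φ x‖ * (‖Φ (x - u)‖ * rho ε u) := by
            rw [norm_mul, norm_mul, RCLike.norm_conj, Complex.norm_real, Real.norm_eq_abs,
              _root_.abs_of_nonneg (rho_nonneg u)]
          rw [h1]
          refine mul_le_mul_of_nonneg_left ?_ (norm_nonneg _)
          exact mul_le_mul_of_nonneg_right (hM _) (rho_nonneg u)
    _ = ∫ u : ℝ, ((rho ε u : ℝ) : ℂ) * AC Φ u := by
        refine integral_congr_ae (Eventually.of_forall fun u => ?_)
        beta_reduce
        rw [AC, ← integral_const_mul]
        refine integral_congr_ae (Eventually.of_forall fun x => ?_)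
        beta_reduce
        ring


lemma key2 {ε : ℝ} (hε : 0 < ε) :
    ∫ u : ℝ, ((rho ε u : ℝ) : ℂ) * AC Φ u
      = ∫ v : ℝ, ((2 * Real.sqrt π * Real.exp (-v^2) : ℝ) : ℂ)
          * AC Φ (2 * Real.sqrt ε * v) := by
  set a : ℝ := 2 * Real.sqrt ε with hadef
  have ha : 0 < a := by
    have := Real.sqrt_pos.2 hε
    positivity
  have h := Measure.integral_comp_mul_left (fun u => ((rho ε u : ℝ) : ℂ) * AC Φ u) a
  have ha2 : a ^ 2 = 4 * ε := by
    rw [hadef, mul_pow, Real.sq_sqrt hε.le]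
    ring
  calc ∫ u : ℝ, ((rho ε u : ℝ) : ℂ) * AC Φ u
      = a • ∫ v : ℝ, ((rho ε (a * v) : ℝ) : ℂ) * AC Φ (a * v) := by
        rw [h, smul_smul, abs_inv, abs_of_pos ha, mul_inv_cancel₀ ha.ne', one_smul]
    _ = ∫ v : ℝ, a • (((rho ε (a * v) : ℝ) : ℂ) * AC Φ (a * v)) := (integral_smul a _).symm
    _ = ∫ v : ℝ, ((2 * Real.sqrt π * Real.exp (-v^2) : ℝ) : ℂ) * AC Φ (a * v) := by
        refine integral_congr_ae (Eventually.of_forall fun v => ?_)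
        beta_reduce
        rw [Complex.real_smul, ← mul_assoc, ← Complex.ofReal_mul]
        congr 2
        rw [rho]
        have h1 : -(4*ε)⁻¹ * (a*v)^2 = -v^2 := by
          field_simp
          rw [ha2]
        rw [h1, ← mul_assoc]
        congr 1
        rw [hadef, mul_assoc]
        congr 1
        rw [← Real.sqrt_mul hε.le]
        congr 1
        field_simp

lemma key3 (hc : Continuous Φ) (hs : HasCompactSupport Φ) :
    Tendsto (fun ε : ℝ => ∫ v : ℝ, ((2 * Real.sqrt π * Real.exp (-v^2) : ℝ) : ℂ)
        * AC Φ (2 * Real.sqrt ε * v))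
      (nhdsWithin 0 (Ioi 0)) (𝓝 (((2 * π : ℝ) : ℂ) * AC Φ 0)) := by
  obtain ⟨M, hM0, hM⟩ := bddΦ hc hs
  set MH : ℝ := M * ∫ x : ℝ, ‖Φ x‖ with hMH
  have hACb : ∀ u, ‖AC Φ u‖ ≤ MH := norm_AC_le hc hs hM
  have hMHnn : 0 ≤ MH := le_trans (norm_nonneg _) (hACb 0)
  have hgauss : Integrable (fun v : ℝ => Real.exp (-v^2)) := by
    have := integrable_exp_neg_mul_sq (one_pos)
    simpa using this
  have hlim : Tendsto (fun ε : ℝ => ∫ v : ℝ, ((2 * Real.sqrt π * Real.exp (-v^2) : ℝ) : ℂ)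
        * AC Φ (2 * Real.sqrt ε * v))
      (nhdsWithin 0 (Ioi 0))
      (𝓝 (∫ v : ℝ, ((2 * Real.sqrt π * Real.exp (-v^2) : ℝ) : ℂ) * AC Φ 0)) := by
    refine tendsto_integral_filter_of_dominated_convergence
      (bound := fun v => 2 * Real.sqrt π * Real.exp (-v^2) * MH) ?_ ?_ ?_ ?_
    · filter_upwards with ε
      refine Continuous.aestronglyMeasurable ?_
      refine Continuous.mul (Complex.continuous_ofReal.comp (by continuity)) ?_
      exact (contAC hc hs).comp (by continuity)
    · filter_upwards with ε
      filter_upwards with v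
      rw [norm_mul, Complex.norm_real, Real.norm_eq_abs, _root_.abs_of_nonneg (by positivity)]
      exact mul_le_mul_of_nonneg_left (hACb _) (by positivity)
    · exact (hgauss.const_mul (2 * Real.sqrt π)).mul_const MH
    · filter_upwards with v
      refine Tendsto.const_mul _ ?_
      refine ((contAC hc hs).tendsto 0).comp ?_
      have hcont : Continuous fun ε : ℝ => 2 * Real.sqrt ε * v := by continuity
      have h5 : Tendsto (fun ε : ℝ => 2 * Real.sqrt ε * v) (nhdsWithin 0 (Ioi 0))
          (𝓝 (2 * Real.sqrt 0 * v)) := (hcont.tendsto 0).mono_left nhdsWithin_le_nhds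
      simpa using h5
  have heval : ∫ v : ℝ, ((2 * Real.sqrt π * Real.exp (-v^2) : ℝ) : ℂ) * AC Φ 0
      = ((2 * π : ℝ) : ℂ) * AC Φ 0 := by
    rw [integral_mul_const]
    congr 1
    have h1 : ∫ v : ℝ, ((2 * Real.sqrt π * Real.exp (-v^2) : ℝ) : ℂ)
        = ((∫ v : ℝ, 2 * Real.sqrt π * Real.exp (-v^2) : ℝ) : ℂ) := integral_ofReal
    rw [h1]
    congr 1
    rw [integral_const_mul]
    have h2 : ∫ v : ℝ, Real.exp (-v^2) = Real.sqrt π := by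
      have := integral_gaussian 1
      simpa using this
    rw [h2, mul_assoc, Real.mul_self_sqrt Real.pi_pos.le]
  rw [← heval]
  exact hlim

lemma key4 (hc : Continuous Φ) (hs : HasCompactSupport Φ) :
    Tendsto (fun ε : ℝ => ∫ s : ℝ, ‖FT Φ s‖^2 * Real.exp (-ε * s^2))
      (nhdsWithin 0 (Ioi 0)) (𝓝 (2 * π * ∫ x : ℝ, ‖Φ x‖^2)) := by
  have hcplx : Tendsto (fun ε : ℝ =>
      (((∫ s : ℝ, ‖FT Φ s‖^2 * Real.exp (-ε * s^2)) : ℝ) : ℂ))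
      (nhdsWithin 0 (Ioi 0)) (𝓝 (((2 * π : ℝ) : ℂ) * AC Φ 0)) := by
    refine Tendsto.congr' ?_ (key3 hc hs)
    filter_upwards [self_mem_nhdsWithin] with ε (hε : ε ∈ Ioi (0:ℝ))
    rw [← key2 (Φ := Φ) hε, ← key1 hc hs hε]
  have hre := (Complex.continuous_re.tendsto _).comp hcplx
  have : Tendsto (fun ε : ℝ => ∫ s : ℝ, ‖FT Φ s‖^2 * Real.exp (-ε * s^2))
      (nhdsWithin 0 (Ioi 0)) (𝓝 ((((2 * π : ℝ) : ℂ) * AC Φ 0).re)) := by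
    refine Tendsto.congr (fun ε => ?_) hre
    simp [Function.comp]
  rw [AC_zero] at this
  simpa using this

lemma key5 (hc : Continuous Φ) (hs : HasCompactSupport Φ) :
    Integrable (fun s : ℝ => ‖FT Φ s‖^2)
      ∧ ∫ s : ℝ, ‖FT Φ s‖^2 = 2 * π * ∫ x : ℝ, ‖Φ x‖^2 := by
  set L : ℝ := 2 * π * ∫ x : ℝ, ‖Φ x‖^2 with hLdef
  have hL0 : 0 ≤ L := by
    have : 0 ≤ ∫ x : ℝ, ‖Φ x‖^2 := integral_nonneg (fun x => by positivity)
    positivity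
  have hGc := contFT hc hs
  have hGcont2 : Continuous (fun s : ℝ => ‖FT Φ s‖^2) := by
    exact (hGc.norm).pow 2
  set M1 : ℝ := ∫ x : ℝ, ‖Φ x‖ with hM1def
  set en : ℕ → ℝ := fun n => ((n : ℝ) + 1)⁻¹ with hen
  have hen_pos : ∀ n, 0 < en n := fun n => by positivity
  have hen_tend : Tendsto en atTop (nhdsWithin 0 (Ioi 0)) := by
    rw [tendsto_nhdsWithin_iff]
    constructor
    · have h1 : Tendsto (fun n : ℕ => (n : ℝ) + 1) atTop atTop :=
        tendsto_atTop_add_const_right _ 1 tendsto_natCast_atTop_atTop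
      exact tendsto_inv_atTop_zero.comp h1
    · filter_upwards with n
      exact hen_pos n
  have hPint : ∀ n, Integrable (fun s : ℝ => ‖FT Φ s‖^2 * Real.exp (-(en n) * s^2)) := by
    intro n
    refine (((integrable_exp_neg_mul_sq (hen_pos n)).const_mul (M1^2)).mono'
      ((hGcont2.mul (by continuity)).aestronglyMeasurable) ?_)
    filter_upwards with s
    rw [Real.norm_eq_abs, _root_.abs_of_nonneg (by positivity)]
    refine mul_le_mul_of_nonneg_right ?_ (Real.exp_pos _).le
    have := norm_FT_le (Φ := Φ) s
    have hnn : 0 ≤ ‖FT Φ s‖ := norm_nonneg _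
    nlinarith
  have hmct : Tendsto (fun n => ∫⁻ s : ℝ, ENNReal.ofReal (‖FT Φ s‖^2 * Real.exp (-(en n) * s^2)))
      atTop (𝓝 (∫⁻ s : ℝ, ENNReal.ofReal (‖FT Φ s‖^2))) := by
    refine lintegral_tendsto_of_tendsto_of_monotone ?_ ?_ ?_
    · intro n
      exact (ENNReal.continuous_ofReal.comp (hGcont2.mul (by continuity))).aemeasurable
    · filter_upwards with s
      intro i j hij
      refine ENNReal.ofReal_le_ofReal ?_
      refine mul_le_mul_of_nonneg_left ?_ (by positivity)
      refine Real.exp_le_exp.2 ?_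
      have h1 : en j ≤ en i := by
        rw [hen]
        refine inv_anti₀ (by positivity) ?_
        have : (i : ℝ) ≤ (j : ℝ) := Nat.cast_le.2 hij
        linarith
      nlinarith [sq_nonneg s]
    · filter_upwards with s
      have h1 : Tendsto (fun n => -(en n) * s^2) atTop (𝓝 0) := by
        have h2 : Tendsto en atTop (𝓝 0) :=
          hen_tend.mono_right nhdsWithin_le_nhds
        have := (h2.neg).mul_const (s^2)
        simpa using this
      have h2 : Tendsto (fun n => Real.exp (-(en n) * s^2)) atTop (𝓝 1) := by
        have := (Real.continuous_exp.tendsto 0).comp h1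
        simpa [Function.comp_def] using this
      have h3 : Tendsto (fun n => ‖FT Φ s‖^2 * Real.exp (-(en n) * s^2)) atTop
          (𝓝 (‖FT Φ s‖^2)) := by
        have := h2.const_mul (‖FT Φ s‖^2)
        simpa using this
      exact (ENNReal.continuous_ofReal.tendsto _).comp h3
  have heq : ∀ n, ∫⁻ s : ℝ, ENNReal.ofReal (‖FT Φ s‖^2 * Real.exp (-(en n) * s^2))
      = ENNReal.ofReal (∫ s : ℝ, ‖FT Φ s‖^2 * Real.exp (-(en n) * s^2)) := by
    intro n
    rw [ofReal_integral_eq_lintegral_ofReal (hPint n)]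
    filter_upwards with s
    positivity
  have hP : Tendsto (fun n => ENNReal.ofReal (∫ s : ℝ, ‖FT Φ s‖^2 * Real.exp (-(en n) * s^2)))
      atTop (𝓝 (ENNReal.ofReal L)) := by
    refine (ENNReal.continuous_ofReal.tendsto _).comp ?_
    exact (key4 hc hs).comp hen_tend
  have hlint : ∫⁻ s : ℝ, ENNReal.ofReal (‖FT Φ s‖^2) = ENNReal.ofReal L := by
    exact tendsto_nhds_unique (hmct.congr heq) hP
  have hfin : Integrable (fun s : ℝ => ‖FT Φ s‖^2) := by
    refine ⟨hGcont2.aestronglyMeasurable, ?_⟩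
    rw [hasFiniteIntegral_iff_ofReal (Eventually.of_forall fun s => by positivity), hlint]
    exact ENNReal.ofReal_lt_top
  refine ⟨hfin, ?_⟩
  rw [integral_eq_lintegral_of_nonneg_ae (Eventually.of_forall fun s => by positivity)
    hGcont2.aestronglyMeasurable, hlint, ENNReal.toReal_ofReal hL0]

lemma planch (hc : Continuous Φ) (hs : HasCompactSupport Φ) :
    Tendsto (fun T : ℝ => ∫ s in Ioo (-T) T, ‖FT Φ s‖^2) atTop
      (𝓝 (2 * π * ∫ x : ℝ, ‖Φ x‖^2)) := by
  obtain ⟨hInt, hVal⟩ := key5 hc hs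
  have h := intervalIntegral_tendsto_integral hInt
    (tendsto_neg_atTop_atBot) (tendsto_id (α := ℝ) (x := atTop))
  rw [hVal] at h
  refine h.congr' ?_
  filter_upwards [eventually_ge_atTop (0:ℝ)] with T hT
  simp only [id]
  rw [intervalIntegral.integral_of_le (by linarith), integral_Ioc_eq_integral_Ioo]


lemma swap_restrict {f : ℝ → ℝ → ℂ} {S : Set ℝ} (hSfin : volume S < ⊤)
    (hmeas : AEStronglyMeasurable (fun z : ℝ × ℝ => f z.1 z.2)
      (volume.prod (volume.restrict S)))
    {g : ℝ → ℝ} (hg : Integrable g) (C : ℝ)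
    (hbound : ∀ x y : ℝ, ‖f x y‖ ≤ g x * C) :
    ∫ x : ℝ, ∫ y in S, f x y = ∫ y in S, ∫ x : ℝ, f x y := by
  haveI : IsFiniteMeasure (volume.restrict S) := ⟨by rwa [Measure.restrict_apply_univ]⟩
  refine integral_integral_swap ?_
  refine ((hg.mul_prod (integrable_const C)).mono' hmeas ?_)
  filter_upwards with z
  exact hbound z.1 z.2

lemma factor (hc : Continuous Φ) (hs : HasCompactSupport Φ) (T : ℝ) :
    ∫ x : ℝ, Φ x * ∫ x' : ℝ, conj (Φ x')
        * ∫ s in Ioo (-T) T, Complex.exp (I * ((x' : ℂ) - (x : ℂ)) * (s : ℂ))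
      = (((∫ s in Ioo (-T) T, ‖FT Φ s‖^2) : ℝ) : ℂ) := by
  have hSfin : volume (Ioo (-T) T) < ⊤ := measure_Ioo_lt_top
  have hΦi := intΦ hc hs
  have hGc := contFT hc hs
  set M1 : ℝ := ∫ x : ℝ, ‖Φ x‖ with hM1def
  calc ∫ x : ℝ, Φ x * ∫ x' : ℝ, conj (Φ x')
        * ∫ s in Ioo (-T) T, Complex.exp (I * ((x' : ℂ) - (x : ℂ)) * (s : ℂ))
      = ∫ x : ℝ, Φ x * ∫ s in Ioo (-T) T, conj (FT Φ s) * Complex.exp (-(I * s * x)) := by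
        refine integral_congr_ae (Eventually.of_forall fun x => ?_)
        beta_reduce
        congr 1
        have step1 : ∫ x' : ℝ, conj (Φ x')
            * ∫ s in Ioo (-T) T, Complex.exp (I * ((x' : ℂ) - (x : ℂ)) * (s : ℂ))
            = ∫ x' : ℝ, ∫ s in Ioo (-T) T,
                conj (Φ x') * Complex.exp (I * ((x' : ℂ) - (x : ℂ)) * (s : ℂ)) := by
          refine integral_congr_ae (Eventually.of_forall fun x' => ?_)
          beta_reduce
          rw [integral_const_mul]
        rw [step1]
        have step2 : ∫ x' : ℝ, ∫ s in Ioo (-T) T,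
              conj (Φ x') * Complex.exp (I * ((x' : ℂ) - (x : ℂ)) * (s : ℂ))
            = ∫ s in Ioo (-T) T, ∫ x' : ℝ,
              conj (Φ x') * Complex.exp (I * ((x' : ℂ) - (x : ℂ)) * (s : ℂ)) := by
          refine swap_restrict hSfin ?_ hΦi.norm 1 (fun x' s => ?_)
          · refine Continuous.aestronglyMeasurable ?_
            refine Continuous.mul (Complex.continuous_conj.comp (hc.comp continuous_fst)) ?_
            refine Complex.continuous_exp.comp ?_
            refine Continuous.mul (Continuous.mul continuous_const ?_) ?_
            · exact (Complex.continuous_ofReal.comp continuous_fst).sub continuous_const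
            · exact Complex.continuous_ofReal.comp continuous_snd
          · rw [norm_mul, RCLike.norm_conj, mul_one]
            have h1 : ‖Complex.exp (I * ((x' : ℂ) - (x : ℂ)) * (s : ℂ))‖ = 1 := by
              have : (I * ((x' : ℂ) - (x : ℂ)) * (s : ℂ)) = I * ((x' - x : ℝ) : ℂ) * (s : ℂ) := by
                push_cast; ring
              rw [this, norm_cexp_I_mul]
            rw [h1, mul_one]
        rw [step2]
        refine setIntegral_congr_fun measurableSet_Ioo (fun s _ => ?_)
        beta_reduce
        rw [conj_FT, ← integral_mul_const]
        refine integral_congr_ae (Eventually.of_forall fun x' => ?_)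
        beta_reduce
        rw [show Complex.exp (I * ((x' : ℂ) - (x : ℂ)) * (s : ℂ))
            = Complex.exp (I * s * x') * Complex.exp (-(I * s * x)) from by
          rw [← Complex.exp_add]; congr 1; push_cast; ring]
        ring
    _ = ∫ s in Ioo (-T) T, ∫ x : ℝ, Φ x * (conj (FT Φ s) * Complex.exp (-(I * s * x))) := by
        have step3 : ∫ x : ℝ, Φ x * ∫ s in Ioo (-T) T, conj (FT Φ s)
              * Complex.exp (-(I * s * x))
            = ∫ x : ℝ, ∫ s in Ioo (-T) T, Φ x * (conj (FT Φ s)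
              * Complex.exp (-(I * s * x))) := by
          refine integral_congr_ae (Eventually.of_forall fun x => ?_)
          beta_reduce
          rw [integral_const_mul]
        rw [step3]
        refine swap_restrict hSfin ?_ hΦi.norm M1 (fun x s => ?_)
        · refine Continuous.aestronglyMeasurable ?_
          refine Continuous.mul (hc.comp continuous_fst) ?_
          refine Continuous.mul ((Complex.continuous_conj.comp hGc).comp continuous_snd) ?_
          refine Complex.continuous_exp.comp ?_
          refine Continuous.neg ?_
          exact (continuous_const.mul (Complex.continuous_ofReal.comp continuous_snd)).mul
            (Complex.continuous_ofReal.comp continuous_fst)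
        · rw [norm_mul, norm_mul, RCLike.norm_conj, norm_cexp_neg_I_mul, mul_one]
          exact mul_le_mul_of_nonneg_left (norm_FT_le s) (norm_nonneg _)
    _ = ∫ s in Ioo (-T) T, ((‖FT Φ s‖^2 : ℝ) : ℂ) := by
        refine setIntegral_congr_fun measurableSet_Ioo (fun s _ => ?_)
        beta_reduce
        rw [show (∫ x : ℝ, Φ x * (conj (FT Φ s) * Complex.exp (-(I * s * x))))
            = ∫ x : ℝ, conj (FT Φ s) * (Φ x * Complex.exp (-(I * s * x))) from
          integral_congr_ae (Eventually.of_forall fun x => by beta_reduce; ring)]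
        rw [integral_const_mul, ← FT, conj_mul_self]
    _ = (((∫ s in Ioo (-T) T, ‖FT Φ s‖^2) : ℝ) : ℂ) :=
        integral_ofReal (f := fun s => ‖FT Φ s‖^2)
          (μ := volume.restrict (Ioo (-T) T)) (𝕜 := ℂ)


def qm (x : ℝ) : ℝ := 1 / (1 + Real.exp (2 * π * x))

def wm (m : ℝ) : ℝ := Real.log ((1 - m) / m) / (2 * π)

lemma qm_mem (x : ℝ) : qm x ∈ Ioo (0:ℝ) 1 := by
  have h := Real.exp_pos (2 * π * x)
  constructor
  · rw [qm]; positivity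
  · rw [qm]
    rw [div_lt_one (by linarith)]
    linarith

lemma one_sub_qm (x : ℝ) : 1 - qm x = Real.exp (2 * π * x) / (1 + Real.exp (2 * π * x)) := by
  have h := Real.exp_pos (2 * π * x)
  rw [qm]
  field_simp
  ring

lemma cont_qm : Continuous qm := by
  apply Continuous.div continuous_const
  · exact continuous_const.add (Real.continuous_exp.comp (by continuity))
  · intro x
    have h := Real.exp_pos (2 * π * x)
    intro hc
    linarith [hc]

lemma strictAnti_qm : StrictAnti qm := by
  intro x y hxy
  have h1 : Real.exp (2 * π * x) < Real.exp (2 * π * y) := by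
    apply Real.exp_lt_exp.2
    have := Real.pi_pos
    nlinarith
  have h2 : (0:ℝ) < 1 + Real.exp (2 * π * x) := by positivity
  rw [qm, qm]
  apply one_div_lt_one_div_of_lt h2
  linarith

lemma hasDerivAt_qm (x : ℝ) :
    HasDerivAt qm (-(2 * π) * (qm x * (1 - qm x))) x := by
  have he := Real.exp_pos (2 * π * x)
  have h1 : HasDerivAt (fun x : ℝ => 2 * π * x) (2 * π) x := by
    simpa using (hasDerivAt_id x).const_mul (2 * π)
  have h2 : HasDerivAt (fun x : ℝ => Real.exp (2 * π * x))
      (Real.exp (2 * π * x) * (2 * π)) x := (Real.hasDerivAt_exp _).comp x h1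
  have h3 : HasDerivAt (fun x : ℝ => 1 + Real.exp (2 * π * x))
      (Real.exp (2 * π * x) * (2 * π)) x := by simpa using h2.const_add 1
  have h4 : HasDerivAt (fun x : ℝ => (1 + Real.exp (2 * π * x))⁻¹) _ x := h3.inv (by positivity)
  have h5 : qm = fun x => (1 + Real.exp (2 * π * x))⁻¹ := by
    funext y; rw [qm, one_div]
  rw [h5]
  convert h4 using 1
  beta_reduce
  field_simp
  ring

lemma qm_wm {m : ℝ} (hm : m ∈ Ioo (0:ℝ) 1) : qm (wm m) = m := by
  obtain ⟨h0, h1⟩ := hm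
  have hfrac : 0 < (1 - m) / m := by
    apply div_pos <;> linarith
  have hπ : (0:ℝ) < 2 * π := by positivity
  rw [qm, wm]
  rw [show 2 * π * (Real.log ((1 - m) / m) / (2 * π)) = Real.log ((1 - m) / m) by
    field_simp]
  rw [Real.exp_log hfrac]
  field_simp
  ring

lemma wm_qm (x : ℝ) : wm (qm x) = x := by
  have he := Real.exp_pos (2 * π * x)
  have hq := qm_mem x
  have h1 : (1 - qm x) / qm x = Real.exp (2 * π * x) := by
    rw [one_sub_qm, qm]
    field_simp
  rw [wm, h1, Real.log_exp]
  have hπ : (π:ℝ) ≠ 0 := Real.pi_ne_zero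
  field_simp

lemma range_qm : Set.range qm = Ioo (0:ℝ) 1 := by
  ext m
  constructor
  · rintro ⟨x, rfl⟩
    exact qm_mem x
  · intro hm
    exact ⟨wm m, qm_wm hm⟩

lemma cov {F : Type*} [NormedAddCommGroup F] [NormedSpace ℝ F] (f : ℝ → F) :
    ∫ m in Ioo (0:ℝ) 1, f m
      = ∫ x : ℝ, (2 * π * (qm x * (1 - qm x))) • f (qm x) := by
  have h := integral_image_eq_integral_abs_deriv_smul MeasurableSet.univ
    (fun x _ => (hasDerivAt_qm x).hasDerivWithinAt)
    (strictAnti_qm.injective.injOn) f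
  rw [image_univ, range_qm, Measure.restrict_univ] at h
  rw [h]
  refine integral_congr_ae (Eventually.of_forall fun x => ?_)
  beta_reduce
  congr 1
  have hq := qm_mem x
  have hpos : 0 < qm x * (1 - qm x) := by
    have := hq.1; have := hq.2; nlinarith
  have hneg : -(2*π) * (qm x * (1 - qm x)) < 0 := by nlinarith [Real.pi_pos]
  rw [abs_of_neg hneg]
  ring


lemma exp_image_Ioo {R : ℝ} (hR : 1 < R) :
    Real.exp '' Ioo (-(Real.log R)) (Real.log R) = Ioo (R⁻¹) R := by
  have hR0 : (0:ℝ) < R := lt_trans one_pos hR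
  ext y
  simp only [mem_image, mem_Ioo]
  constructor
  · rintro ⟨x, ⟨h1, h2⟩, rfl⟩
    constructor
    · have h3 := Real.exp_lt_exp.2 h1
      rwa [Real.exp_neg, Real.exp_log hR0] at h3
    · have h3 := Real.exp_lt_exp.2 h2
      rwa [Real.exp_log hR0] at h3
  · rintro ⟨h1, h2⟩
    have hy : 0 < y := lt_trans (by positivity) h1
    refine ⟨Real.log y, ⟨?_, ?_⟩, Real.exp_log hy⟩
    · have h3 := Real.log_lt_log (by positivity) h1
      rwa [Real.log_inv] at h3
    · exact Real.log_lt_log hy h2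

lemma conj_betaExp_add {m m' : ℝ} :
    conj (betaExp m') + betaExp m = -1 + I * ((wm m' : ℂ) - (wm m : ℂ)) := by
  simp only [betaExp, map_sub, map_neg, map_mul, map_div₀, Complex.conj_ofReal,
    Complex.conj_I, map_one, map_ofNat]
  rw [wm, wm]
  have hπ : ((π:ℝ) : ℂ) ≠ 0 := by
    exact_mod_cast Complex.ofReal_ne_zero.2 Real.pi_ne_zero
  push_cast
  field_simp
  ring

lemma inner_E {m m' R : ℝ} (hm : m ∈ Ioo (0:ℝ) 1) (hm' : m' ∈ Ioo (0:ℝ) 1) (hR : 1 < R) :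
    ∫ E in Ioo (R⁻¹) R, conj (gm m' E) * gm m E
      = (((2 * π * Real.sqrt (m' * (1 - m')))⁻¹ * (2 * π * Real.sqrt (m * (1 - m)))⁻¹ : ℝ) : ℂ)
        * ∫ s in Ioo (-(Real.log R)) (Real.log R),
            Complex.exp (I * ((wm m' : ℂ) - (wm m : ℂ)) * (s : ℂ)) := by
  have hπ : (π:ℝ) ≠ 0 := Real.pi_ne_zero
  have hmpos : 0 < m * (1 - m) := by nlinarith [hm.1, hm.2]
  have hmpos' : 0 < m' * (1 - m') := by nlinarith [hm'.1, hm'.2]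
  have hsm : 0 < Real.sqrt (m * (1 - m)) := Real.sqrt_pos.2 hmpos
  have hsm' : 0 < Real.sqrt (m' * (1 - m')) := Real.sqrt_pos.2 hmpos'
  set z : ℂ := -1 + I * ((wm m' : ℂ) - (wm m : ℂ)) with hz
  set c : ℝ := (2 * π * Real.sqrt (m' * (1 - m')))⁻¹ * (2 * π * Real.sqrt (m * (1 - m)))⁻¹
    with hc
  have hstep : ∀ E ∈ Ioo (R⁻¹) R, conj (gm m' E) * gm m E
      = ((c : ℝ) : ℂ) * Complex.exp ((Real.log E : ℂ) * z) := by
    intro E hE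
    have hE0 : 0 < E := lt_trans (by positivity) hE.1
    have hlog : Complex.log (E : ℂ) = (Real.log E : ℂ) := (Complex.ofReal_log hE0.le).symm
    have hcpow : ∀ β : ℂ, (E:ℂ) ^ β = Complex.exp ((Real.log E : ℂ) * β) := by
      intro β
      rw [Complex.cpow_def_of_ne_zero (by exact_mod_cast hE0.ne'), hlog]
    rw [gm, gm, hcpow, hcpow, map_mul, ← Complex.exp_conj, map_mul, Complex.conj_ofReal]
    have hco : conj (1 / (2 * (π:ℂ) * ((Real.sqrt (m' * (1 - m')) : ℝ) : ℂ)))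
        = 1 / (2 * (π:ℂ) * ((Real.sqrt (m' * (1 - m')) : ℝ) : ℂ)) := by
      rw [map_div₀, map_one, map_mul, map_mul, Complex.conj_ofReal, map_ofNat,
        Complex.conj_ofReal]
    rw [hco]
    have hre : (1 / (2 * (π:ℂ) * ((Real.sqrt (m' * (1 - m')) : ℝ) : ℂ)))
        * Complex.exp ((Real.log E : ℂ) * conj (betaExp m'))
        * ((1 / (2 * (π:ℂ) * ((Real.sqrt (m * (1 - m)) : ℝ) : ℂ)))
          * Complex.exp ((Real.log E : ℂ) * betaExp m))
        = ((c : ℝ) : ℂ) * (Complex.exp ((Real.log E : ℂ) * conj (betaExp m'))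
            * Complex.exp ((Real.log E : ℂ) * betaExp m)) := by
      rw [hc]
      push_cast
      ring
    rw [hre, ← Complex.exp_add, ← mul_add, conj_betaExp_add, ← hz]
  rw [setIntegral_congr_fun measurableSet_Ioo hstep, integral_const_mul]
  congr 1
  have himg := exp_image_Ioo hR
  have hcov := integral_image_eq_integral_abs_deriv_smul (f := Real.exp) (f' := Real.exp)
    (measurableSet_Ioo (a := -(Real.log R)) (b := Real.log R))
    (fun x _ => (Real.hasDerivAt_exp x).hasDerivWithinAt)
    (Real.exp_injective.injOn)
    (fun E => Complex.exp ((Real.log E : ℂ) * z))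
  rw [himg] at hcov
  rw [hcov]
  refine setIntegral_congr_fun measurableSet_Ioo (fun x _ => ?_)
  beta_reduce
  rw [Real.log_exp, abs_of_pos (Real.exp_pos x), Complex.real_smul, Complex.ofReal_exp,
    ← Complex.exp_add]
  congr 1
  rw [hz]
  ring


lemma scal {t : ℝ} (ht : 0 < t) : 2 * π * t * (2 * π * Real.sqrt t)⁻¹ = Real.sqrt t := by
  have hs : 0 < Real.sqrt t := Real.sqrt_pos.2 ht
  have hπ := Real.pi_pos
  have h2 : Real.sqrt t * Real.sqrt t = t := Real.mul_self_sqrt ht.le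
  have h3 : 2 * π * t = (2 * π * Real.sqrt t) * Real.sqrt t := by
    linear_combination (2 * π) * h2.symm
  rw [h3, mul_comm (2 * π * Real.sqrt t) (Real.sqrt t), mul_assoc,
    mul_inv_cancel₀ (by positivity), mul_one]

end Stmt11Aux
end Stmt11AuxSection

/-- Distributional orthonormality `∫₀^∞ conj(g_{m'}(E)) g_m(E) dE = δ(m - m')`: smeared
against test functions on `(0,1)` (with the `E`-integral regularized by symmetric
multiplicative cutoff), the double integral reproduces `∫₀¹ |φ(m)|² dm`. -/
theorem stmt11 (φ : ℝ → ℂ) (hφ : Continuous φ) (hsupp : tsupport φ ⊆ Ioo (0 : ℝ) 1) :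
    Tendsto
      (fun R : ℝ => ∫ m in Ioo (0 : ℝ) 1, ∫ m' in Ioo (0 : ℝ) 1,
        (starRingEnd ℂ) (φ m') * φ m *
          ∫ E in Ioo (R⁻¹) R, (starRingEnd ℂ) (gm m' E) * gm m E)
      atTop (nhds ((∫ m in Ioo (0 : ℝ) 1, (‖φ m‖ ^ 2 : ℝ) : ℝ) : ℂ)) := by
  classical
  have hKcomp : IsCompact (tsupport φ) := by
    refine Metric.isCompact_of_isClosed_isBounded (isClosed_tsupport φ) ?_
    exact (Metric.isBounded_Ioo 0 1).subset hsupp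
  set K' : Set ℝ := tsupport φ ∪ {1/2} with hK'def
  have hK'comp : IsCompact K' := hKcomp.union isCompact_singleton
  have hK'ne : K'.Nonempty := ⟨1/2, Or.inr rfl⟩
  have hK'sub : K' ⊆ Ioo 0 1 := by
    refine union_subset hsupp ?_
    intro x hx
    rw [mem_singleton_iff] at hx
    subst hx
    constructor <;> norm_num
  set a : ℝ := sInf K' with hadef
  set b : ℝ := sSup K' with hbdef
  have ha : a ∈ K' := hK'comp.sInf_mem hK'ne
  have hb : b ∈ K' := hK'comp.sSup_mem hK'ne
  have haI : a ∈ Ioo (0:ℝ) 1 := hK'sub ha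
  have hbI : b ∈ Ioo (0:ℝ) 1 := hK'sub hb
  set Φ : ℝ → ℂ := fun x => φ (Stmt11Aux.qm x)
    * ((Real.sqrt (Stmt11Aux.qm x * (1 - Stmt11Aux.qm x)) : ℝ) : ℂ) with hΦdef
  have hΦc : Continuous Φ := by
    refine Continuous.mul (hφ.comp Stmt11Aux.cont_qm) ?_
    refine Complex.continuous_ofReal.comp ?_
    exact Real.continuous_sqrt.comp
      (Stmt11Aux.cont_qm.mul (continuous_const.sub Stmt11Aux.cont_qm))
  have hΦs : HasCompactSupport Φ := by
    refine HasCompactSupport.intro (isCompact_Icc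
      (a := Stmt11Aux.wm b) (b := Stmt11Aux.wm a)) ?_
    intro x hx
    by_contra hne
    have hφq : φ (Stmt11Aux.qm x) ≠ 0 := by
      intro h0
      apply hne
      rw [hΦdef]
      beta_reduce
      rw [h0, zero_mul]
    have hmem : Stmt11Aux.qm x ∈ K' := Or.inl (subset_tsupport φ hφq)
    have h1 : a ≤ Stmt11Aux.qm x := csInf_le hK'comp.bddBelow hmem
    have h2 : Stmt11Aux.qm x ≤ b := le_csSup hK'comp.bddAbove hmem
    apply hx
    constructor
    · have : Stmt11Aux.qm x ≤ Stmt11Aux.qm (Stmt11Aux.wm b) := by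
        rw [Stmt11Aux.qm_wm hbI]; exact h2
      exact (Stmt11Aux.strictAnti_qm.le_iff_ge).1 this
    · have : Stmt11Aux.qm (Stmt11Aux.wm a) ≤ Stmt11Aux.qm x := by
        rw [Stmt11Aux.qm_wm haI]; exact h1
      exact (Stmt11Aux.strictAnti_qm.le_iff_ge).1 this
  have hRHS : ∫ m in Ioo (0:ℝ) 1, (‖φ m‖^2 : ℝ) = 2 * π * ∫ x : ℝ, ‖Φ x‖^2 := by
    rw [Stmt11Aux.cov (fun m => (‖φ m‖^2 : ℝ)), ← integral_const_mul]
    refine integral_congr_ae (Eventually.of_forall fun x => ?_)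
    beta_reduce
    have hq := Stmt11Aux.qm_mem x
    have hpos : 0 < Stmt11Aux.qm x * (1 - Stmt11Aux.qm x) := by
      nlinarith [hq.1, hq.2]
    rw [hΦdef]
    beta_reduce
    rw [norm_mul, Complex.norm_real, Real.norm_eq_abs,
      _root_.abs_of_nonneg (Real.sqrt_nonneg _), mul_pow, Real.sq_sqrt hpos.le,
      smul_eq_mul]
    ring
  have hEq : ∀ R : ℝ, 1 < R →
      (∫ m in Ioo (0 : ℝ) 1, ∫ m' in Ioo (0 : ℝ) 1,
        (starRingEnd ℂ) (φ m') * φ m *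
          ∫ E in Ioo (R⁻¹) R, (starRingEnd ℂ) (gm m' E) * gm m E)
      = (((∫ s in Ioo (-(Real.log R)) (Real.log R), ‖Stmt11Aux.FT Φ s‖^2 : ℝ)) : ℂ) := by
    intro R hR
    set T : ℝ := Real.log R with hTdef
    set Kc : ℝ → ℝ → ℂ := fun p t => ∫ s in Ioo (-T) T,
      Complex.exp (I * ((p : ℂ) - (t : ℂ)) * (s : ℂ)) with hKcdef
    calc ∫ m in Ioo (0 : ℝ) 1, ∫ m' in Ioo (0 : ℝ) 1,
        (starRingEnd ℂ) (φ m') * φ m *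
          ∫ E in Ioo (R⁻¹) R, (starRingEnd ℂ) (gm m' E) * gm m E
        = ∫ m in Ioo (0 : ℝ) 1, φ m * (((2 * π * Real.sqrt (m * (1 - m)))⁻¹ : ℝ) : ℂ)
            * ∫ m' in Ioo (0 : ℝ) 1, (starRingEnd ℂ) (φ m')
              * (((2 * π * Real.sqrt (m' * (1 - m')))⁻¹ : ℝ) : ℂ)
              * Kc (Stmt11Aux.wm m') (Stmt11Aux.wm m) := by
          refine setIntegral_congr_fun measurableSet_Ioo (fun m hm => ?_)
          beta_reduce
          rw [← integral_const_mul]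
          refine setIntegral_congr_fun measurableSet_Ioo (fun m' hm' => ?_)
          beta_reduce
          rw [Stmt11Aux.inner_E hm hm' hR]
          rw [hKcdef]
          push_cast
          ring
      _ = ∫ m in Ioo (0 : ℝ) 1, φ m * (((2 * π * Real.sqrt (m * (1 - m)))⁻¹ : ℝ) : ℂ)
            * ∫ x' : ℝ, (starRingEnd ℂ) (Φ x') * Kc x' (Stmt11Aux.wm m) := by
          refine setIntegral_congr_fun measurableSet_Ioo (fun m hm => ?_)
          beta_reduce
          congr 1
          rw [Stmt11Aux.cov (fun m' => (starRingEnd ℂ) (φ m')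
            * (((2 * π * Real.sqrt (m' * (1 - m')))⁻¹ : ℝ) : ℂ)
            * Kc (Stmt11Aux.wm m') (Stmt11Aux.wm m))]
          refine integral_congr_ae (Eventually.of_forall fun x' => ?_)
          beta_reduce
          have hq := Stmt11Aux.qm_mem x'
          have hpos : 0 < Stmt11Aux.qm x' * (1 - Stmt11Aux.qm x') := by
            nlinarith [hq.1, hq.2]
          rw [Stmt11Aux.wm_qm, Complex.real_smul, hΦdef]
          beta_reduce
          rw [map_mul, Complex.conj_ofReal]
          rw [show ((2 * π * (Stmt11Aux.qm x' * (1 - Stmt11Aux.qm x')) : ℝ) : ℂ)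
              * ((starRingEnd ℂ) (φ (Stmt11Aux.qm x'))
                * (((2 * π * Real.sqrt (Stmt11Aux.qm x' * (1 - Stmt11Aux.qm x')))⁻¹ : ℝ) : ℂ)
                * Kc x' (Stmt11Aux.wm m))
              = ((starRingEnd ℂ) (φ (Stmt11Aux.qm x'))
                * ((2 * π * (Stmt11Aux.qm x' * (1 - Stmt11Aux.qm x'))
                    * (2 * π * Real.sqrt (Stmt11Aux.qm x' * (1 - Stmt11Aux.qm x')))⁻¹ : ℝ) : ℂ)
                * Kc x' (Stmt11Aux.wm m)) from by push_cast; ring]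
          rw [Stmt11Aux.scal hpos]
      _ = ∫ x : ℝ, Φ x * ∫ x' : ℝ, (starRingEnd ℂ) (Φ x') * Kc x' x := by
          rw [Stmt11Aux.cov (fun m => φ m * (((2 * π * Real.sqrt (m * (1 - m)))⁻¹ : ℝ) : ℂ)
            * ∫ x' : ℝ, (starRingEnd ℂ) (Φ x') * Kc x' (Stmt11Aux.wm m))]
          refine integral_congr_ae (Eventually.of_forall fun x => ?_)
          beta_reduce
          have hq := Stmt11Aux.qm_mem x
          have hpos : 0 < Stmt11Aux.qm x * (1 - Stmt11Aux.qm x) := by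
            nlinarith [hq.1, hq.2]
          rw [Stmt11Aux.wm_qm, Complex.real_smul, hΦdef]
          beta_reduce
          rw [show ((2 * π * (Stmt11Aux.qm x * (1 - Stmt11Aux.qm x)) : ℝ) : ℂ)
              * (φ (Stmt11Aux.qm x)
                * (((2 * π * Real.sqrt (Stmt11Aux.qm x * (1 - Stmt11Aux.qm x)))⁻¹ : ℝ) : ℂ)
                * ∫ x' : ℝ, (starRingEnd ℂ) (Φ x') * Kc x' x)
              = (φ (Stmt11Aux.qm x)
                * ((2 * π * (Stmt11Aux.qm x * (1 - Stmt11Aux.qm x))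
                    * (2 * π * Real.sqrt (Stmt11Aux.qm x * (1 - Stmt11Aux.qm x)))⁻¹ : ℝ) : ℂ)
                * ∫ x' : ℝ, (starRingEnd ℂ) (Φ x') * Kc x' x) from by push_cast; ring]
          rw [Stmt11Aux.scal hpos]
      _ = (((∫ s in Ioo (-T) T, ‖Stmt11Aux.FT Φ s‖^2 : ℝ)) : ℂ) :=
          Stmt11Aux.factor hΦc hΦs T
  have h1 := Stmt11Aux.planch hΦc hΦs
  have h2 := h1.comp Real.tendsto_log_atTop
  have h3 := (Complex.continuous_ofReal.tendsto _).comp h2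
  have h3' : Tendsto (fun R : ℝ =>
      (((∫ s in Ioo (-(Real.log R)) (Real.log R), ‖Stmt11Aux.FT Φ s‖^2 : ℝ)) : ℂ))
      atTop (nhds (((2 * π * ∫ x : ℝ, ‖Φ x‖^2 : ℝ)) : ℂ)) := h3
  rw [show ((∫ m in Ioo (0 : ℝ) 1, (‖φ m‖ ^ 2 : ℝ) : ℝ) : ℂ)
      = (((2 * π * ∫ x : ℝ, ‖Φ x‖^2 : ℝ)) : ℂ) from by rw [hRHS]]
  refine Tendsto.congr' ?_ h3'
  filter_upwards [eventually_gt_atTop (1:ℝ)] with R hR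
  exact (hEq R hR).symm

end
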